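/- arXiv:2308.12190 — 7 statements merged into one kernel-verified Lean document; each statement's English description precedes it below -/
import Mathlib

section
/- The unique realization of the degree sequence (3,3,3,3,3,1) contains an induced subgraph that is not a unigraph; hence the class of unigraphs is not hereditary. -/
open scoped Classical

/-- The degree sequence of a finite simple graph, as a multiset of vertex degrees. -/
noncomputable def degSeq {V : Type*} [Fintype V] (G : SimpleGraph V) : Multiset ℕ :=
  Finset.univ.val.map fun v => (G.neighborSet v).ncard

/-- A graph is a unigraph if every graph with the same degree sequence is isomorphic to it. -/
def IsUnigraph {V : Type} [Fintype V] (G : SimpleGraph V) : Prop :=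
  ∀ (W : Type) [Fintype W] (H : SimpleGraph W), degSeq G = degSeq H → Nonempty (G ≃g H)

/-!
Let `v` be the vertex of degree one and `u` its neighbour; `u` has two further neighbours
`c, d`, and the remaining two vertices `a, b` are adjacent neither to `v` nor to `u`. Having
degree three, each of `a, b` is then adjacent to all of the other three vertices among
`a, b, c, d`, after which `c` and `d` already have their three neighbours `u, a, b`. So the
graph is `K₄` minus the edge `cd` on `{a, b, c, d}`, with `u` joined to `c, d` and a pendant
vertex `v` at `u`.

Deleting `a` leaves a 4-cycle `u c b d` with the pendant edge `uv`, which is triangle-free and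
has degree sequence `(3, 2, 2, 2, 1)`, like the triangle with a path of length two attached.
-/

open SimpleGraph Finset

section DegreeSequence

variable {V : Type*} [Fintype V]

theorem degSeq_eq_map_degree (G : SimpleGraph V) [DecidableRel G.Adj] :
    degSeq G = univ.val.map fun v => G.degree v := by
  unfold degSeq
  congr 1
  funext v
  rw [← card_neighborFinset_eq_degree, ← Set.ncard_coe_finset, coe_neighborFinset]

theorem card_degSeq (G : SimpleGraph V) : Multiset.card (degSeq G) = Fintype.card V := by
  simp [degSeq]

theorem exists_degree_eq_of_degSeq_eq_cons_replicate {G : SimpleGraph V} [DecidableRel G.Adj]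
    {j k n : ℕ} (hjk : j ≠ k) (h : degSeq G = j ::ₘ Multiset.replicate n k) :
    ∃ v, G.degree v = j ∧ ∀ w ≠ v, G.degree w = k := by
  rw [degSeq_eq_map_degree] at h
  have hcount : #{w | G.degree w = j} = 1 := by
    have := congrArg (Multiset.count j) h
    rw [Multiset.count_map, Multiset.count_cons_self, Multiset.count_replicate, if_neg hjk.symm]
      at this
    simpa [eq_comm, Finset.card, filter_val] using this
  obtain ⟨v, hv⟩ := card_eq_one.mp hcount
  have hfilter : ∀ w, G.degree w = j ↔ w = v := fun w => by
    simpa using congrArg (w ∈ ·) hv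
  refine ⟨v, (hfilter v).mpr rfl, fun w hwv => ?_⟩
  have hmem : G.degree w ∈ j ::ₘ Multiset.replicate n k :=
    h ▸ Multiset.mem_map_of_mem _ (mem_univ_val w)
  rcases Multiset.mem_cons.mp hmem with hj | hk
  · exact absurd ((hfilter w).mp hj) hwv
  · exact Multiset.eq_of_mem_replicate hk

theorem not_isUnigraph_of_cliqueFree {V W : Type} [Fintype V] [Fintype W] {G : SimpleGraph V}
    {H : SimpleGraph W} {n : ℕ} (hG : G.CliqueFree n) (hH : ¬H.CliqueFree n)
    (hdeg : degSeq G = degSeq H) : ¬IsUnigraph G := fun hU =>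
  let ⟨e⟩ := hU W H hdeg
  hH (hG.comap e.isContained')

end DegreeSequence

section Neighborhoods

variable {V W : Type*} [Fintype V] [Fintype W] {G : SimpleGraph W} {H : SimpleGraph V}

theorem nonempty_iso_of_neighborSet_eq_image (f : W → V) (hf : Function.Injective f)
    (hcard : Fintype.card W = Fintype.card V)
    (hN : ∀ i, H.neighborSet (f i) = f '' G.neighborSet i) : Nonempty (G ≃g H) :=
  ⟨⟨Equiv.ofBijective f ((Fintype.bijective_iff_injective_and_card f).mpr ⟨hf, hcard⟩),
    fun {i j} => by
      rw [Equiv.ofBijective_apply, Equiv.ofBijective_apply, ← mem_neighborSet, hN,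
        hf.mem_set_image, mem_neighborSet]⟩⟩

variable [DecidableRel H.Adj]

theorem neighborFinset_eq_of_forall_adj_mem {x : V} {s : Finset V}
    (hs : ∀ w, H.Adj x w → w ∈ s) (hcard : #s ≤ H.degree x) : H.neighborFinset x = s :=
  eq_of_subset_of_card_le (fun w hw => hs w ((mem_neighborFinset _ _ _).mp hw)) hcard

theorem neighborFinset_eq_of_forall_mem_adj {x : V} {s : Finset V}
    (hs : ∀ w ∈ s, H.Adj x w) (hcard : H.degree x ≤ #s) : H.neighborFinset x = s :=
  (eq_of_subset_of_card_le (fun w hw => (mem_neighborFinset _ _ _).mpr (hs w hw)) hcard).symm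

theorem exists_neighborFinset_eq_insert_pair [DecidableEq V] {u v : V} (hu : H.degree u = 3)
    (huv : H.Adj u v) : ∃ c d, c ≠ d ∧ v ≠ c ∧ v ≠ d ∧ H.neighborFinset u = {v, c, d} := by
  have hv : v ∈ H.neighborFinset u := (mem_neighborFinset _ _ _).mpr huv
  obtain ⟨c, d, hcd, herase⟩ := card_eq_two.mp <| by
    rw [card_erase_of_mem hv, card_neighborFinset_eq_degree, hu]
  have hc : c ∈ (H.neighborFinset u).erase v := by simp [herase]
  have hd : d ∈ (H.neighborFinset u).erase v := by simp [herase]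
  exact ⟨c, d, hcd, (ne_of_mem_erase hc).symm, (ne_of_mem_erase hd).symm,
    by rw [← herase, insert_erase hv]⟩

end Neighborhoods

/-- The vertices `v, u, c, d, a, b` of the header are `0, 1, 2, 3, 4, 5`. -/
def pendantGraph : SimpleGraph (Fin 6) :=
  fromEdgeSet ↑({s(0, 1), s(1, 2), s(1, 3), s(2, 4), s(2, 5), s(3, 4), s(3, 5), s(4, 5)} :
    Finset (Sym2 (Fin 6)))

instance : DecidableRel pendantGraph.Adj :=
  inferInstanceAs (DecidableRel (fromEdgeSet _).Adj)

theorem pendantGraph_neighborFinset (i : Fin 6) :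
    pendantGraph.neighborFinset i =
      ![{1}, {0, 2, 3}, {1, 4, 5}, {1, 4, 5}, {2, 3, 5}, {2, 3, 4}] i := by
  revert i
  decide

def tadpole : SimpleGraph (Fin 5) :=
  fromEdgeSet ↑({s(0, 1), s(0, 2), s(1, 2), s(2, 3), s(3, 4)} : Finset (Sym2 (Fin 5)))

instance : DecidableRel tadpole.Adj :=
  inferInstanceAs (DecidableRel (fromEdgeSet _).Adj)

section Uniqueness

variable {V : Type*} [Fintype V] [DecidableEq V] {H : SimpleGraph V} [DecidableRel H.Adj]

theorem exists_pendant_labelling (hcard : Fintype.card V = 6) {v : V} (hv : H.degree v = 1)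
    (hdeg : ∀ w ≠ v, H.degree w = 3) :
    ∃ u c d a b, [v, u, c, d, a, b].Nodup ∧
      H.neighborFinset v = {u} ∧ H.neighborFinset u = {v, c, d} := by
  obtain ⟨u, hNv⟩ := card_eq_one.mp hv
  have hvu : H.Adj v u := by simp [← mem_neighborFinset, hNv]
  obtain ⟨c, d, hcd, hvc, hvd, hNu⟩ :=
    exists_neighborFinset_eq_insert_pair (hdeg u hvu.ne') hvu.symm
  have huc : u ≠ c := H.ne_of_adj (by simp [← mem_neighborFinset, hNu])
  have hud : u ≠ d := H.ne_of_adj (by simp [← mem_neighborFinset, hNu])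
  obtain ⟨a, b, hab, hcompl⟩ : ∃ a b, a ≠ b ∧ ({v, u, c, d} : Finset V)ᶜ = {a, b} := by
    refine card_eq_two.mp ?_
    rw [card_compl, card_insert_of_notMem (by simp [hvu.ne, hvc, hvd]),
      card_insert_of_notMem (by simp [huc, hud]), card_pair hcd, hcard]
  have ha : a ∈ ({v, u, c, d} : Finset V)ᶜ := hcompl ▸ mem_insert_self a {b}
  have hb : b ∈ ({v, u, c, d} : Finset V)ᶜ := hcompl ▸ mem_insert_of_mem (mem_singleton_self b)
  refine ⟨u, c, d, a, b, ?_, hNv, hNu⟩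
  have := hvu.ne
  simp only [mem_compl, mem_insert, mem_singleton, not_or] at ha hb
  simp only [List.nodup_cons, List.mem_cons, List.not_mem_nil, or_false, not_or,
    List.nodup_nil, and_true]
  grind

theorem nonempty_iso_pendantGraph_of_neighborFinset (hcard : Fintype.card V = 6)
    {v u c d a b : V} (hnodup : [v, u, c, d, a, b].Nodup)
    (hNv : H.neighborFinset v = {u}) (hNu : H.neighborFinset u = {v, c, d})
    (hNc : H.neighborFinset c = {u, a, b}) (hNd : H.neighborFinset d = {u, a, b})
    (hNa : H.neighborFinset a = {c, d, b}) (hNb : H.neighborFinset b = {c, d, a}) :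
    Nonempty (pendantGraph ≃g H) := by
  refine nonempty_iso_of_neighborSet_eq_image ![v, u, c, d, a, b] ?_ (by simp [hcard]) ?_
  · intro i j hij
    simp only [List.nodup_cons, List.mem_cons, List.not_mem_nil, or_false, not_or,
      List.nodup_nil, and_true] at hnodup
    fin_cases i <;> fin_cases j <;> simp_all [eq_comm]
  · intro i
    rw [← coe_neighborFinset pendantGraph, pendantGraph_neighborFinset]
    fin_cases i <;>
      simp [← coe_neighborFinset, hNv, hNu, hNc, hNd, hNa, hNb, Set.image_insert_eq]

theorem nonempty_iso_pendantGraph_of_labelling (hcard : Fintype.card V = 6) {v u c d a b : V}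
    (hnodup : [v, u, c, d, a, b].Nodup) (hdeg : ∀ w ≠ v, H.degree w = 3)
    (hNv : H.neighborFinset v = {u}) (hNu : H.neighborFinset u = {v, c, d}) :
    Nonempty (pendantGraph ≃g H) := by
  have hcover : ∀ w, w ∈ [v, u, c, d, a, b] := fun w => by
    rw [← List.mem_toFinset, eq_univ_of_card [v, u, c, d, a, b].toFinset
      (by rw [List.toFinset_card_of_nodup hnodup, hcard]; rfl)]
    exact mem_univ w
  have hNv' : ∀ w, H.Adj v w ↔ w = u := by simp [← mem_neighborFinset, hNv]
  have hNu' : ∀ w, H.Adj u w ↔ w = v ∨ w = c ∨ w = d := by simp [← mem_neighborFinset, hNu]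
  have hne := hnodup
  simp only [List.mem_cons, List.not_mem_nil, or_false] at hcover
  simp only [List.nodup_cons, List.mem_cons, List.not_mem_nil, or_false, not_or,
    List.nodup_nil, and_true] at hne
  have hNab : ∀ x y, x = a ∧ y = b ∨ x = b ∧ y = a → H.neighborFinset x = {c, d, y} := by
    intro x y hxy
    refine neighborFinset_eq_of_forall_adj_mem (fun w hw => ?_)
      (card_le_three.trans (hdeg x (by grind)).ge)
    simp only [mem_insert, mem_singleton]
    grind [hcover w, H.ne_of_adj hw, hNv' x, hNu' x, hw.symm]
  have hNa := hNab a b (Or.inl ⟨rfl, rfl⟩)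
  have hNb := hNab b a (Or.inr ⟨rfl, rfl⟩)
  have hNcd : ∀ x, x = c ∨ x = d → H.neighborFinset x = {u, a, b} := by
    intro x hx
    refine neighborFinset_eq_of_forall_mem_adj ?_ ?_
    · simp only [mem_insert, mem_singleton, forall_eq_or_imp, forall_eq, H.adj_comm x]
      rcases hx with rfl | rfl <;> simp [← mem_neighborFinset, hNu, hNa, hNb]
    · rw [card_insert_of_notMem (by grind), card_pair (by grind), hdeg x (by grind)]
  exact nonempty_iso_pendantGraph_of_neighborFinset hcard hnodup hNv hNu
    (hNcd c (Or.inl rfl)) (hNcd d (Or.inr rfl)) hNa hNb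

theorem nonempty_iso_pendantGraph (hcard : Fintype.card V = 6) {v : V} (hv : H.degree v = 1)
    (hdeg : ∀ w ≠ v, H.degree w = 3) : Nonempty (pendantGraph ≃g H) :=
  let ⟨_, _, _, _, _, hnodup, hNv, hNu⟩ := exists_pendant_labelling hcard hv hdeg
  nonempty_iso_pendantGraph_of_labelling hcard hnodup hdeg hNv hNu

end Uniqueness

/-- There is a graph `G` with degree sequence `(3,3,3,3,3,1)` which is the unique realization
of that degree sequence, yet `G` contains an induced subgraph that is not a unigraph; hence
the class of unigraphs is not hereditary. -/
theorem stmt3 :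
    ∃ G : SimpleGraph (Fin 6),
      degSeq G = ({3, 3, 3, 3, 3, 1} : Multiset ℕ) ∧
      (∀ (W : Type) [Fintype W] (H : SimpleGraph W),
        degSeq H = ({3, 3, 3, 3, 3, 1} : Multiset ℕ) → Nonempty (H ≃g G)) ∧
      ∃ s : Finset (Fin 6), ¬ IsUnigraph (G.induce (↑s : Set (Fin 6))) := by
  refine ⟨pendantGraph, by rw [degSeq_eq_map_degree]; decide, fun W _ H hH => ?_,
    univ.erase 4, ?_⟩
  · have hcard : Fintype.card W = 6 := by rw [← card_degSeq H, hH]; rfl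
    obtain ⟨v, hv, hdeg⟩ :=
      exists_degree_eq_of_degSeq_eq_cons_replicate (j := 1) (k := 3) (n := 5) (by norm_num)
        (hH.trans (by decide))
    obtain ⟨e⟩ := nonempty_iso_pendantGraph hcard hv hdeg
    exact ⟨e.symm⟩
  · refine not_isUnigraph_of_cliqueFree (H := tadpole) (n := 3) ?_ ?_ ?_
    · rw [← cliqueFinset_eq_empty_iff]; decide
    · exact fun h => h {0, 1, 2} (by decide)
    · rw [degSeq_eq_map_degree, degSeq_eq_map_degree]; decide
end

section
/- Tyshkevich composition is associative: for split graphs G₁ with KS-partition K₁ ∪ S₁ and G₂ with KS-partition K₂ ∪ S₂, and any graph H, the graphs (G₁ ∘ G₂) ∘ H and G₁ ∘ (G₂ ∘ H) are isomorphic (indeed equal on the common vertex set), where G₁ ∘ G₂ is given the KS-partition (K₁ ∪ K₂) ∪ (S₁ ∪ S₂). -/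
/-- A set of vertices is independent if no two of its vertices are adjacent. -/
def IsIndep {V : Type} (G : SimpleGraph V) (S : Set V) : Prop :=
  S.Pairwise fun a b => ¬ G.Adj a b

/-- `K ∪ S` is a KS-partition of `G`: the vertex set is partitioned into a clique `K`
and an independent set `S`. -/
def IsKSPart {V : Type} (G : SimpleGraph V) (K S : Set V) : Prop :=
  (∀ v, v ∈ K ∨ v ∈ S) ∧ (∀ v, ¬(v ∈ K ∧ v ∈ S)) ∧ G.IsClique K ∧ IsIndep G S

/-- A split graph: the vertices can be partitioned into a clique and an independent set. -/
def IsSplit {V : Type} (G : SimpleGraph V) : Prop :=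
  ∃ K S : Set V, IsKSPart G K S

/-- The Tyshkevich composition of a split graph `G1` (with clique part `K`) with a graph `G0`:
disjoint union of `G1` and `G0` plus all edges between `K` and `G0`. -/
def tcomp {V1 V0 : Type} (G1 : SimpleGraph V1) (K : Set V1) (G0 : SimpleGraph V0) :
    SimpleGraph (V1 ⊕ V0) where
  Adj x y :=
    match x, y with
    | Sum.inl a, Sum.inl b => G1.Adj a b
    | Sum.inl a, Sum.inr _ => a ∈ K
    | Sum.inr _, Sum.inl b => b ∈ K
    | Sum.inr a, Sum.inr b => G0.Adj a b
  symm := by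
    constructor
    rintro (a | a) (b | b) h
    · exact G1.adj_symm h
    · exact h
    · exact h
    · exact G0.adj_symm h
  loopless := by
    constructor
    rintro (a | a) h
    · exact G1.irrefl h
    · exact G0.irrefl h

def tcompAssoc {V1 V2 V0 : Type} (G1 : SimpleGraph V1) (K1 : Set V1) (G2 : SimpleGraph V2)
    (K2 : Set V2) (H : SimpleGraph V0) :
    tcomp (tcomp G1 K1 G2) {x : V1 ⊕ V2 | Sum.elim (· ∈ K1) (· ∈ K2) x} H ≃g
      tcomp G1 K1 (tcomp G2 K2 H) where
  toEquiv := Equiv.sumAssoc V1 V2 V0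
  map_rel_iff' := by rintro ((a | a) | a) ((b | b) | b) <;> exact Iff.rfl

theorem stmt6_general {V1 V2 V0 : Type} (G1 : SimpleGraph V1) (K1 : Set V1)
    (G2 : SimpleGraph V2) (K2 : Set V2) (H : SimpleGraph V0) :
    Nonempty
      ((tcomp (tcomp G1 K1 G2) {x : V1 ⊕ V2 | Sum.elim (· ∈ K1) (· ∈ K2) x} H) ≃g
        (tcomp G1 K1 (tcomp G2 K2 H))) :=
  ⟨tcompAssoc G1 K1 G2 K2 H⟩

/-- Tyshkevich composition is associative: `(G₁ ∘ G₂) ∘ H ≃g G₁ ∘ (G₂ ∘ H)`, where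
`G₁ ∘ G₂` carries the KS-partition `(K₁ ∪ K₂) ∪ (S₁ ∪ S₂)`. -/
theorem stmt6 {V1 V2 V0 : Type} (G1 : SimpleGraph V1) (K1 S1 : Set V1)
    (G2 : SimpleGraph V2) (K2 S2 : Set V2) (H : SimpleGraph V0)
    (h1 : IsKSPart G1 K1 S1) (h2 : IsKSPart G2 K2 S2) :
    Nonempty
      ((tcomp (tcomp G1 K1 G2) {x : V1 ⊕ V2 | Sum.elim (· ∈ K1) (· ∈ K2) x} H) ≃g
        (tcomp G1 K1 (tcomp G2 K2 H))) :=
  stmt6_general G1 K1 G2 K2 H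
end

section
/- Let π and ρ be graphic sequences. Then π is Rao-contained in ρ (i.e., some realization of π is an induced subgraph of some realization of ρ) if and only if ρ can be obtained from π by a finite sequence of augmentation steps, where augmenting a graphic sequence σ by a nonnegative integer k means increasing k distinct terms of σ by 1 and inserting a new term equal to k. -/
open scoped Classical

/-- A multiset of naturals is graphic if it is the degree sequence of some finite graph. -/
def Graphic (π : Multiset ℕ) : Prop :=
  ∃ (n : ℕ) (G : SimpleGraph (Fin n)), degSeq G = π

/-- Rao containment: some realization of `π` is an induced subgraph of some realization
of `ρ`. -/
def RaoLE (π ρ : Multiset ℕ) : Prop :=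
  ∃ (n m : ℕ) (G : SimpleGraph (Fin n)) (H : SimpleGraph (Fin m)),
    degSeq G = π ∧ degSeq H = ρ ∧ Nonempty (G ↪g H)

/-- `σ'` is obtained from `σ` by augmenting by the term `k`: increase `k` distinct terms of
`σ` by `1` (a submultiset `t` of size `k`) and insert a new term equal to `k`. -/
def Augment (σ σ' : Multiset ℕ) : Prop :=
  ∃ t : Multiset ℕ, t ≤ σ ∧ σ' = (σ - t) + t.map (· + 1) + {Multiset.card t}

/-! Let `v` be a vertex of `H` and `H - v` the graph left after deleting it. Then `degSeq H` is
`degSeq (H - v)` augmented by `deg v`, the raised terms being the degrees of the neighbours of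
`v`. Hence if `G` is an induced subgraph of `H`, deleting the vertices of `H` outside `G` one at a
time exhibits `degSeq H` as an iterated augmentation of `degSeq G`. Conversely, any augmentation
of `degSeq H` is realised by adjoining to `H` a new vertex adjacent to vertices of the prescribed
degrees, and `H`, hence every induced subgraph of `H`, stays induced in the larger graph. -/

theorem Multiset.exists_le_eq_map_of_le_map {α β : Type*} {f : α → β} {t : Multiset β} :
    ∀ {u : Multiset α}, t ≤ u.map f → ∃ u' ≤ u, u'.map f = t := by
  induction t using Multiset.induction with
  | empty => exact fun _ => ⟨0, Multiset.zero_le _, rfl⟩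
  | cons b t ih =>
    intro u h
    obtain ⟨a, ha, rfl⟩ :=
      Multiset.mem_map.mp (Multiset.mem_of_le h (Multiset.mem_cons_self _ t))
    have hu : u.map f = f a ::ₘ (u.erase a).map f := by
      rw [← Multiset.map_cons, Multiset.cons_erase ha]
    rw [hu, Multiset.cons_le_cons_iff] at h
    obtain ⟨u', hu', rfl⟩ := ih h
    exact ⟨a ::ₘ u', (Multiset.cons_le_cons a hu').trans (Multiset.cons_erase ha).le, by simp⟩

theorem Multiset.map_add_ite_eq {α : Type*} (u : Multiset α) (p : α → Prop) [DecidablePred p]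
    (g : α → ℕ) :
    u.map (fun a => g a + if p a then 1 else 0) =
      (u.map g - (u.filter p).map g) + ((u.filter p).map g).map (· + 1) := by
  have hsplit := Multiset.filter_add_not p u
  have hg : u.map g = (u.filter p).map g + (u.filter (¬p ·)).map g := by
    rw [← Multiset.map_add, hsplit]
  rw [hg, add_tsub_cancel_left, Multiset.map_map]
  conv_lhs => rw [← hsplit]
  rw [Multiset.map_add, add_comm]
  congr 1 <;>
    exact Multiset.map_congr rfl fun a ha => by simp [(Multiset.mem_filter.mp ha).2]

section DegreeSequence

variable {V W : Type*} [Fintype V] [Fintype W] {G : SimpleGraph V} {H : SimpleGraph W}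

theorem degSeq_eq_map_degree_s11 (G : SimpleGraph V) :
    degSeq G = Finset.univ.val.map (G.degree ·) := by
  refine Multiset.map_congr rfl fun v _ => ?_
  rw [← SimpleGraph.card_neighborSet_eq_degree, Set.ncard_eq_toFinset_card', Set.toFinset_card]

theorem degree_eq_card_filter (H : SimpleGraph W) (w : W) :
    H.degree w = Multiset.card (Finset.univ.val.filter (H.Adj w)) := by
  rw [← SimpleGraph.card_neighborFinset_eq_degree, SimpleGraph.neighborFinset_eq_filter]
  rfl

theorem degSeq_eq_of_iso (e : G ≃g H) : degSeq G = degSeq H := by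
  rw [degSeq_eq_map_degree_s11, degSeq_eq_map_degree_s11, ← Multiset.map_univ_val_equiv e.toEquiv,
    Multiset.map_map]
  exact Multiset.map_congr rfl fun v _ => (e.degree_eq v).symm

theorem raoLE_of_embedding (f : G ↪g H) : RaoLE (degSeq G) (degSeq H) := by
  let eG := SimpleGraph.Iso.comap (Fintype.equivFin V).symm G
  let eH := SimpleGraph.Iso.comap (Fintype.equivFin W).symm H
  exact ⟨_, _, _, _, degSeq_eq_of_iso eG, degSeq_eq_of_iso eH,
    ⟨eH.symm.toEmbedding.comp (f.comp eG.toEmbedding)⟩⟩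

end DegreeSequence

section VertexDeletion

variable {V W : Type*} [Fintype V] [Fintype W] {G : SimpleGraph V} {H : SimpleGraph W}
  (f : G ↪g H) {v : W}

theorem univ_val_eq_cons_map_of_range_eq_compl (hf : Set.range f = {v}ᶜ) :
    (Finset.univ : Finset W).val = v ::ₘ Finset.univ.val.map f := by
  have hv : v ∉ Finset.univ.map f.toEmbedding := by
    simp [← Set.mem_range, hf]
  have huniv : (Finset.univ : Finset W) = Finset.cons v (Finset.univ.map f.toEmbedding) hv := by
    ext w
    simp [← Set.mem_range, hf, em]
  rw [huniv, Finset.cons_val, Finset.map_val]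
  rfl

theorem degree_apply_of_range_eq_compl (hf : Set.range f = {v}ᶜ) (a : V) :
    H.degree (f a) = G.degree a + if H.Adj v (f a) then 1 else 0 := by
  rw [degree_eq_card_filter, degree_eq_card_filter, univ_val_eq_cons_map_of_range_eq_compl f hf,
    Multiset.filter_cons, Multiset.filter_map, H.adj_comm]
  have hfilter : Finset.univ.val.filter (H.Adj (f a) ∘ f) = Finset.univ.val.filter (G.Adj a) :=
    Multiset.filter_congr fun b _ => f.map_adj_iff
  rw [hfilter, Multiset.card_add, Multiset.card_map, add_comm, apply_ite Multiset.card,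
    Multiset.card_singleton, Multiset.card_zero]

theorem degree_of_range_eq_compl (hf : Set.range f = {v}ᶜ) :
    H.degree v = Multiset.card (Finset.univ.val.filter fun a => H.Adj v (f a)) := by
  rw [degree_eq_card_filter, univ_val_eq_cons_map_of_range_eq_compl f hf,
    Multiset.filter_cons_of_neg _ (H.loopless.irrefl v), Multiset.filter_map, Multiset.card_map]
  rfl

theorem degSeq_eq_of_range_eq_compl (hf : Set.range f = {v}ᶜ) (s : Finset V)
    (hs : ∀ a, a ∈ s ↔ H.Adj v (f a)) :
    degSeq H = (degSeq G - s.val.map (G.degree ·)) + (s.val.map (G.degree ·)).map (· + 1) +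
      {Multiset.card (s.val.map (G.degree ·))} := by
  have hs_val : Finset.univ.val.filter (· ∈ s) = s.val := by
    rw [← Finset.filter_val, Finset.filter_univ_mem]
  have hdeg : ∀ a, H.degree (f a) = G.degree a + if a ∈ s then 1 else 0 := fun a => by
    simp only [degree_apply_of_range_eq_compl f hf, hs]
  have hdeg_v : H.degree v = s.card := by
    rw [degree_of_range_eq_compl f hf, ← Multiset.filter_congr fun a _ => hs a, hs_val]
    rfl
  rw [degSeq_eq_map_degree_s11, degSeq_eq_map_degree_s11, univ_val_eq_cons_map_of_range_eq_compl f hf,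
    Multiset.map_cons, Multiset.map_map, Function.comp_def, funext hdeg, hdeg_v,
    Multiset.map_add_ite_eq, hs_val, Multiset.card_map, ← Multiset.singleton_add, add_comm]
  rfl

theorem augment_degSeq_of_range_eq_compl (hf : Set.range f = {v}ᶜ) :
    Augment (degSeq G) (degSeq H) := by
  refine ⟨_, ?_, degSeq_eq_of_range_eq_compl f hf (Finset.univ.filter fun a => H.Adj v (f a))
    fun a => by simp⟩
  rw [degSeq_eq_map_degree_s11]
  exact Multiset.map_le_map (Finset.val_le_iff.mpr (Finset.subset_univ _))

end VertexDeletion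

theorem reflTransGen_augment_degSeq_of_embedding {V W : Type*} [Fintype V] [Fintype W]
    {G : SimpleGraph V} {H : SimpleGraph W} (f : G ↪g H) :
    Relation.ReflTransGen Augment (degSeq G) (degSeq H) := by
  induction hcard : Fintype.card W using Nat.strong_induction_on generalizing W with
  | _ n ih =>
    by_cases hsurj : Function.Surjective f
    · rw [degSeq_eq_of_iso (RelIso.ofSurjective f hsurj)]
    · obtain ⟨v, hv⟩ := not_forall.mp hsurj
      have hrange : Set.range f ⊆ {v}ᶜ := fun w ⟨a, ha⟩ hw => hv ⟨a, ha.trans hw⟩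
      let g : G ↪g H.induce {v}ᶜ := (H.induceHomOfLE hrange).comp f.isoInduceRange.toEmbedding
      have hlt : Fintype.card ({v}ᶜ : Set W) < n :=
        hcard ▸ Fintype.card_subtype_lt (x := v) (by simp)
      exact (ih _ hlt g rfl).tail
        (augment_degSeq_of_range_eq_compl (SimpleGraph.Embedding.induce _) Subtype.range_coe)

namespace SimpleGraph

variable {V : Type*}

def adjoinVertex (H : SimpleGraph V) (s : Set V) : SimpleGraph (Option V) where
  Adj
    | some a, some b => H.Adj a b
    | none, some b | some b, none => b ∈ s
    | none, none => False
  symm := ⟨by rintro (_ | a) (_ | b) h <;> first | exact h | exact h.symm⟩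
  loopless := ⟨by rintro (_ | a) h; exacts [h, H.loopless.irrefl a h]⟩

def embeddingAdjoinVertex (H : SimpleGraph V) (s : Set V) : H ↪g H.adjoinVertex s :=
  ⟨Function.Embedding.some, Iff.rfl⟩

theorem range_embeddingAdjoinVertex (H : SimpleGraph V) (s : Set V) :
    Set.range (H.embeddingAdjoinVertex s) = {none}ᶜ := by
  change Set.range some = _
  ext (_ | a) <;> simp

theorem degSeq_adjoinVertex [Fintype V] (H : SimpleGraph V) (s : Finset V) :
    degSeq (H.adjoinVertex s) = (degSeq H - s.val.map (H.degree ·)) +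
      (s.val.map (H.degree ·)).map (· + 1) + {Multiset.card (s.val.map (H.degree ·))} :=
  degSeq_eq_of_range_eq_compl _ (H.range_embeddingAdjoinVertex s) s fun _ => Iff.rfl

end SimpleGraph

theorem RaoLE.trans_augment {π σ ρ : Multiset ℕ} (h : RaoLE π σ) (hσρ : Augment σ ρ) :
    RaoLE π ρ := by
  obtain ⟨n, m, G, H, rfl, rfl, ⟨f⟩⟩ := h
  obtain ⟨t, ht, rfl⟩ := hσρ
  rw [degSeq_eq_map_degree_s11] at ht
  obtain ⟨u, hu, rfl⟩ := Multiset.exists_le_eq_map_of_le_map ht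
  let s : Finset (Fin m) := ⟨u, Multiset.nodup_of_le hu Finset.univ.nodup⟩
  have h := raoLE_of_embedding ((H.embeddingAdjoinVertex s).comp f)
  rwa [SimpleGraph.degSeq_adjoinVertex] at h

theorem stmt11_general (π ρ : Multiset ℕ) (hπ : Graphic π) :
    RaoLE π ρ ↔ Relation.ReflTransGen Augment π ρ := by
  constructor
  · rintro ⟨n, m, G, H, rfl, rfl, ⟨f⟩⟩
    exact reflTransGen_augment_degSeq_of_embedding f
  · intro h
    induction h with
    | refl =>
      obtain ⟨n, G, rfl⟩ := hπ
      exact raoLE_of_embedding (SimpleGraph.Embedding.refl (G := G))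
    | tail _ hσρ ih => exact ih.trans_augment hσρ

/-- `π ⪯ ρ` in the Rao order iff `ρ` is obtained from `π` by a finite sequence of
augmentation steps. -/
theorem stmt11 (π ρ : Multiset ℕ) (hπ : Graphic π) (hρ : Graphic ρ) :
    RaoLE π ρ ↔ Relation.ReflTransGen Augment π ρ :=
  stmt11_general π ρ hπ
end

section
/- The Rao relation on graphic sequences is transitive: if π ⪯ ρ and ρ ⪯ τ, then π ⪯ τ. -/
open scoped Classical

/-!
Let `G` be induced in `H` and `H'` induced in `K`, where `H` and `H'` realize the same degree
sequence. Match the vertices of `H` with those of `H'` by a degree-preserving bijection and, inside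
`K`, replace the edges of the copy of `H'` by those of `H` placed along this bijection. Every vertex
keeps its degree: outside the copy nothing changes, and a vertex of the copy trades its `H'`-degree
for the equal `H`-degree while keeping its neighbours outside the copy. The new graph realizes the
degree sequence of `K` and contains `H`, hence `G`, as an induced subgraph.
-/

open SimpleGraph

theorem exists_equiv_apply_eq_of_map_univ_eq {α β γ : Type*} [Fintype α] [Fintype β]
    {f : α → γ} {g : β → γ} (h : Finset.univ.val.map f = Finset.univ.val.map g) :
    ∃ e : α ≃ β, ∀ a, g (e a) = f a := by
  have hfiber : ∀ c, Fintype.card {a // f a = c} = Fintype.card {b // g b = c} := by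
    intro c
    have hc := congrArg (Multiset.count c) h
    rw [Multiset.count_map, Multiset.count_map] at hc
    rw [Fintype.card_subtype, Fintype.card_subtype]
    simpa [Finset.card, Finset.filter, eq_comm] using hc
  let e := Equiv.ofFiberEquiv fun c => Fintype.equivOfCardEq (hfiber c)
  exact ⟨e, Equiv.ofFiberEquiv_map _⟩

section ReplaceInduced

variable {V W : Type*} (K : SimpleGraph W) (f : V ↪ W) (H : SimpleGraph V)

def replaceInduced : SimpleGraph W :=
  (K \ (K.comap f).map f) ⊔ H.map f

@[simp]
theorem comap_replaceInduced : (replaceInduced K f H).comap f = H := by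
  ext a b
  simp [replaceInduced]

variable {K f H} in
theorem replaceInduced_adj_of_not_mem_range {x y : W}
    (hxy : x ∉ Set.range f ∨ y ∉ Set.range f) : (replaceInduced K f H).Adj x y ↔ K.Adj x y := by
  have hmap : ∀ G : SimpleGraph V, ¬ (G.map f).Adj x y := by
    rintro G ⟨-, a, b, -, rfl, rfl⟩
    simp at hxy
  simp only [replaceInduced, sup_adj, sdiff_adj, hmap, not_false_eq_true, and_true, or_false]

theorem ncard_neighborSet_eq_comap_add [Finite W] (L : SimpleGraph W) (a : V) :
    (L.neighborSet (f a)).ncard =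
      ((L.comap f).neighborSet a).ncard + (L.neighborSet (f a) \ Set.range f).ncard := by
  have hinside : L.neighborSet (f a) ∩ Set.range f = f '' (L.comap f).neighborSet a := by
    ext y
    constructor
    · rintro ⟨hy, b, rfl⟩
      exact ⟨b, hy, rfl⟩
    · rintro ⟨b, hb, rfl⟩
      exact ⟨hb, b, rfl⟩
  rw [← Set.ncard_inter_add_ncard_sdiff_eq_ncard _ (Set.range f), hinside,
    Set.ncard_image_of_injective _ f.injective]

variable {K f H}

theorem ncard_neighborSet_replaceInduced [Finite W]
    (hdeg : ∀ a, ((K.comap f).neighborSet a).ncard = (H.neighborSet a).ncard) (x : W) :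
    ((replaceInduced K f H).neighborSet x).ncard = (K.neighborSet x).ncard := by
  have houtside : ∀ x, (replaceInduced K f H).neighborSet x \ Set.range f =
      K.neighborSet x \ Set.range f := fun x => by
    ext y
    simp only [Set.mem_sdiff, mem_neighborSet]
    exact and_congr_left fun hy => replaceInduced_adj_of_not_mem_range (Or.inr hy)
  by_cases hx : x ∈ Set.range f
  · obtain ⟨a, rfl⟩ := hx
    rw [ncard_neighborSet_eq_comap_add f, ncard_neighborSet_eq_comap_add f K,
      comap_replaceInduced, houtside, hdeg]
  · congr 1
    ext y
    exact replaceInduced_adj_of_not_mem_range (Or.inl hx)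

theorem degSeq_replaceInduced [Fintype W]
    (hdeg : ∀ a, ((K.comap f).neighborSet a).ncard = (H.neighborSet a).ncard) :
    degSeq (replaceInduced K f H) = degSeq K :=
  Multiset.map_congr rfl fun x _ => ncard_neighborSet_replaceInduced hdeg x

end ReplaceInduced

theorem exists_degSeq_eq_and_embedding {V V' W : Type*} [Fintype V] [Fintype V'] [Fintype W]
    {H : SimpleGraph V} {H' : SimpleGraph V'} {K : SimpleGraph W}
    (hH : degSeq H = degSeq H') (f : H' ↪g K) :
    ∃ K' : SimpleGraph W, degSeq K' = degSeq K ∧ Nonempty (H ↪g K') := by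
  obtain ⟨e, he⟩ := exists_equiv_apply_eq_of_map_univ_eq hH
  let g : V ↪ W := e.toEmbedding.trans f.toEmbedding
  have hcomap : K.comap g = H'.comap e := by
    ext a b
    simp [g]
  have hdeg : ∀ a, ((K.comap g).neighborSet a).ncard = (H.neighborSet a).ncard := fun a => by
    rw [hcomap, ← he, ← Set.ncard_image_of_injective _ e.injective]
    exact congrArg Set.ncard (Iso.comap e H').image_neighborSet
  refine ⟨replaceInduced K g H, degSeq_replaceInduced hdeg, ⟨⟨g, ?_⟩⟩⟩
  intro a b
  rw [← comap_adj, comap_replaceInduced]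

/-- The Rao relation is transitive. -/
theorem stmt12 (π ρ τ : Multiset ℕ) (h1 : RaoLE π ρ) (h2 : RaoLE ρ τ) : RaoLE π τ := by
  obtain ⟨n, m, G, H, hG, hH, ⟨e1⟩⟩ := h1
  obtain ⟨m', k, H', K, hH', hK, ⟨e2⟩⟩ := h2
  obtain ⟨K', hK', ⟨e3⟩⟩ := exists_degSeq_eq_and_embedding (hH.trans hH'.symm) e2
  exact ⟨n, k, G, K', hG, hK'.trans hK, ⟨e3.comp e1⟩⟩
end

section
/- (Kleitman–Wang) Given a non-increasing graphic sequence (d₁, …, dₙ) and an index k ∈ {1, …, n}, there exists a graph with vertices v₁, …, vₙ in which vᵢ has degree dᵢ for every i, and vₖ is adjacent exactly to the dₖ vertices vⱼ (j ≠ k) with smallest indices. -/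
/-!
Among all realizations of `d`, take one minimising the sum of the indices of the neighbours
of `k`. If `k` were adjacent to `j` but not to some `i ≠ k` with `i < j`, then `d j ≤ d i`
gives a neighbour `w ≠ j` of `i` that is not adjacent to `j`, and the 2-switch trading the
edges `kj`, `iw` for `ki`, `jw` keeps every degree while lowering that sum. So the
neighbourhood of `k` is downward closed among the vertices other than `k`; pulled back along
`k.succAbove` it is a lower set of `Fin (n - 1)` of size `d k`, i.e. its first `d k` elements.
-/

namespace SimpleGraph

variable {V : Type*} (G : SimpleGraph V) {a b c e : V}

def twoSwitch (a b c e : V) : SimpleGraph V :=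
  fromEdgeSet (G.edgeSet \ {s(a, c), s(b, e)} ∪ {s(a, b), s(c, e)})

lemma twoSwitch_comm : G.twoSwitch a b c e = G.twoSwitch b a e c := by
  simp only [twoSwitch, Sym2.eq_swap, Set.pair_comm]

lemma twoSwitch_swap : G.twoSwitch a b c e = G.twoSwitch c e a b := by
  simp only [twoSwitch, Sym2.eq_swap, Set.pair_comm]

lemma neighborSet_twoSwitch_left (hab : a ≠ b) (hac : a ≠ c) (hae : a ≠ e) :
    (G.twoSwitch a b c e).neighborSet a = insert b (G.neighborSet a \ {c}) := by
  ext x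
  simp only [twoSwitch, mem_neighborSet, fromEdgeSet_adj, Set.mem_union, Set.mem_sdiff,
    Set.mem_insert_iff, Set.mem_singleton_iff, mem_edgeSet, Sym2.eq_iff]
  grind [G.ne_of_adj]

lemma neighborSet_twoSwitch_of_ne {v : V} (ha : v ≠ a) (hb : v ≠ b) (hc : v ≠ c)
    (he : v ≠ e) : (G.twoSwitch a b c e).neighborSet v = G.neighborSet v := by
  ext x
  simp only [twoSwitch, mem_neighborSet, fromEdgeSet_adj, Set.mem_union, Set.mem_sdiff,
    Set.mem_insert_iff, Set.mem_singleton_iff, mem_edgeSet, Sym2.eq_iff]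
  grind [G.ne_of_adj]

lemma ncard_neighborSet_twoSwitch_left (hac : G.Adj a c) (hab : ¬ G.Adj a b) (hne : a ≠ b)
    (hae : a ≠ e) : ((G.twoSwitch a b c e).neighborSet a).ncard = (G.neighborSet a).ncard := by
  rw [G.neighborSet_twoSwitch_left hne hac.ne hae]
  exact Set.ncard_exchange hab hac

lemma ncard_neighborSet_twoSwitch (hac : G.Adj a c) (hbe : G.Adj b e) (hab : ¬ G.Adj a b)
    (hce : ¬ G.Adj c e) (hne_ab : a ≠ b) (hne_ce : c ≠ e) (v : V) :
    ((G.twoSwitch a b c e).neighborSet v).ncard = (G.neighborSet v).ncard := by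
  have hae : a ≠ e := by rintro rfl; exact hab hbe.symm
  have hbc : b ≠ c := by rintro rfl; exact hab hac
  by_cases hva : v = a
  · subst hva; exact G.ncard_neighborSet_twoSwitch_left hac hab hne_ab hae
  by_cases hvb : v = b
  · subst hvb
    rw [twoSwitch_comm]
    exact G.ncard_neighborSet_twoSwitch_left hbe (fun h => hab h.symm) hne_ab.symm hbc
  by_cases hvc : v = c
  · subst hvc
    rw [twoSwitch_swap]
    exact G.ncard_neighborSet_twoSwitch_left hac.symm hce hne_ce hbc.symm
  by_cases hve : v = e
  · subst hve
    rw [twoSwitch_swap, twoSwitch_comm]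
    exact G.ncard_neighborSet_twoSwitch_left hbe.symm (fun h => hce h.symm) hne_ce.symm hae.symm
  rw [G.neighborSet_twoSwitch_of_ne hva hvb hvc hve]

variable [Finite V]

lemma ncard_neighborSet_sdiff_add (i j : V) :
    (G.neighborSet i \ {j}).ncard + (G.neighborSet j).ncard =
      (G.neighborSet j \ {i}).ncard + (G.neighborSet i).ncard := by
  by_cases hij : G.Adj i j
  · rw [← Set.ncard_sdiff_singleton_add_one (s := G.neighborSet i) hij,
      ← Set.ncard_sdiff_singleton_add_one (s := G.neighborSet j) hij.symm]
    ring
  · rw [Set.sdiff_singleton_eq_self (s := G.neighborSet i) hij,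
      Set.sdiff_singleton_eq_self (s := G.neighborSet j) (fun h => hij h.symm), add_comm]

lemma exists_adj_not_adj_of_ncard_le {k i j : V} (hne : k ≠ i) (hki : ¬ G.Adj k i)
    (hkj : G.Adj k j) (hij : (G.neighborSet j).ncard ≤ (G.neighborSet i).ncard) :
    ∃ w, w ≠ j ∧ G.Adj i w ∧ ¬ G.Adj j w := by
  by_contra! h
  have hsub : G.neighborSet i \ {j} ⊆ G.neighborSet j \ {i} := fun w hw =>
    ⟨h w hw.2 hw.1, fun hwi => G.irrefl (hwi ▸ hw.1 : G.Adj i i)⟩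
  have hk : k ∈ G.neighborSet j \ {i} ∧ k ∉ G.neighborSet i \ {j} :=
    ⟨⟨hkj.symm, hne⟩, fun hk => hki hk.1.symm⟩
  have := Set.ncard_lt_ncard ((Set.ssubset_iff_of_subset hsub).2 ⟨k, hk⟩)
  have := G.ncard_neighborSet_sdiff_add i j
  omega

end SimpleGraph

lemma finsum_mem_insert_sdiff_lt {α M : Type*} [AddCommMonoid M] [PartialOrder M]
    [IsOrderedCancelAddMonoid M] {s : Set α} {a b : α} {f : α → M}
    (hs : s.Finite) (ha : a ∈ s) (hb : b ∉ s) (hf : f b < f a) :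
    ∑ᶠ x ∈ insert b (s \ {a}), f x < ∑ᶠ x ∈ s, f x := by
  have hsa : (s \ {a}).Finite := hs.sdiff
  calc ∑ᶠ x ∈ insert b (s \ {a}), f x = f b + ∑ᶠ x ∈ s \ {a}, f x :=
        finsum_mem_insert f (fun h => hb h.1) hsa
    _ < f a + ∑ᶠ x ∈ s \ {a}, f x := add_lt_add_left hf _
    _ = ∑ᶠ x ∈ s, f x := by
        rw [← finsum_mem_insert f (fun h => h.2 rfl) hsa, Set.insert_sdiff_singleton,
          Set.insert_eq_of_mem ha]

lemma Fin.mem_iff_lt_ncard_of_isLowerSet {m : ℕ} {T : Set (Fin m)} (hT : IsLowerSet T)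
    (t : Fin m) : t ∈ T ↔ (t : ℕ) < T.ncard := by
  constructor
  · intro ht
    have hle := Set.ncard_le_ncard (fun x (hx : x ∈ Set.Iic t) => hT hx ht)
    rw [← Finset.coe_Iic, Set.ncard_coe_finset, Fin.card_Iic] at hle
    omega
  · intro ht
    by_contra hnt
    have hle : T.ncard ≤ (Set.Iio t).ncard :=
      Set.ncard_le_ncard fun x hx => lt_of_not_ge fun htx => hnt (hT htx hx)
    rw [← Finset.coe_Iio, Set.ncard_coe_finset, Fin.card_Iio] at hle
    omega

lemma Fin.rank_succAbove {m : ℕ} (k : Fin (m + 1)) (t : Fin m) :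
    (if (k.succAbove t : ℕ) < k then (k.succAbove t : ℕ) else (k.succAbove t : ℕ) - 1) =
      t := by
  rcases lt_or_ge t.castSucc k with h | h
  · rw [Fin.succAbove_of_castSucc_lt _ _ h, Fin.val_castSucc,
      if_pos (show (t : ℕ) < k from h)]
  · rw [Fin.succAbove_of_le_castSucc _ _ h, Fin.val_succ, if_neg]
    · rfl
    · rw [Fin.le_def, Fin.val_castSucc] at h
      omega

lemma exists_realization_adj_of_adj_of_lt {n : ℕ} (d : Fin n → ℕ)
    (hmono : ∀ i j : Fin n, i ≤ j → d j ≤ d i)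
    (hgraphic : ∃ G : SimpleGraph (Fin n), ∀ i, (G.neighborSet i).ncard = d i) (k : Fin n) :
    ∃ G : SimpleGraph (Fin n), (∀ i, (G.neighborSet i).ncard = d i) ∧
      ∀ i j, i ≠ k → i < j → G.Adj k j → G.Adj k i := by
  obtain ⟨G, hG, hmin⟩ :=
    Set.exists_min_image {G : SimpleGraph (Fin n) | ∀ i, (G.neighborSet i).ncard = d i}
      (fun G => ∑ᶠ b ∈ G.neighborSet k, (b : ℕ)) (Set.toFinite _) hgraphic
  refine ⟨G, hG, fun i j hik hij hkj => ?_⟩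
  by_contra hki
  obtain ⟨w, hwj, hiw, hjw⟩ := G.exists_adj_not_adj_of_ncard_le hik.symm hki hkj
    (by rw [hG, hG]; exact hmono i j hij.le)
  have hwk : w ≠ k := by rintro rfl; exact hki hiw.symm
  have hG' : ∀ v, ((G.twoSwitch k i j w).neighborSet v).ncard = d v := fun v => by
    rw [G.ncard_neighborSet_twoSwitch hkj hiw hki hjw hik.symm hwj.symm, hG]
  have hlt := finsum_mem_insert_sdiff_lt (s := G.neighborSet k) (f := fun b : Fin n => (b : ℕ))
    (Set.toFinite _) hkj hki hij
  rw [← G.neighborSet_twoSwitch_left hik.symm hkj.ne hwk.symm] at hlt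
  exact (hmin _ hG').not_gt hlt

/-- (Kleitman–Wang) Given a non-increasing graphic sequence `d : Fin n → ℕ` and an index
`k`, there is a realization in which vertex `i` has degree `d i` for every `i` and vertex
`k` is adjacent exactly to the first `d k` vertices other than `k` (i.e. those `j ≠ k`
whose rank among the indices different from `k` is below `d k`). -/
theorem stmt14 {n : ℕ} (d : Fin n → ℕ)
    (hmono : ∀ i j : Fin n, i ≤ j → d j ≤ d i)
    (hgraphic : ∃ G : SimpleGraph (Fin n), ∀ i, (G.neighborSet i).ncard = d i)
    (k : Fin n) :
    ∃ G : SimpleGraph (Fin n), (∀ i, (G.neighborSet i).ncard = d i) ∧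
      ∀ j : Fin n, j ≠ k →
        (G.Adj k j ↔ (if (j : ℕ) < (k : ℕ) then (j : ℕ) else (j : ℕ) - 1) < d k) := by
  obtain ⟨G, hG, hclosed⟩ := exists_realization_adj_of_adj_of_lt d hmono hgraphic k
  refine ⟨G, hG, fun j hjk => ?_⟩
  obtain ⟨m, rfl⟩ : ∃ m, n = m + 1 := ⟨n - 1, by have := k.pos; omega⟩
  obtain ⟨t, rfl⟩ := Fin.exists_succAbove_eq hjk
  have hT : IsLowerSet (k.succAbove ⁻¹' G.neighborSet k) := isLowerSet_iff_forall_lt.2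
    fun x y hyx hx => hclosed _ _ (k.succAbove_ne y) (Fin.strictMono_succAbove k hyx) hx
  have hcard : (k.succAbove ⁻¹' G.neighborSet k).ncard = d k := by
    rw [Set.ncard_preimage_of_injective_subset_range Fin.succAbove_right_injective
      (by rw [Fin.range_succAbove]; exact fun x hx => hx.ne'), hG k]
  rw [Fin.rank_succAbove, ← hcard]
  exact Fin.mem_iff_lt_ncard_of_isLowerSet hT t
end

section
/- If π is a graphic sequence and π' is a KW-reduction of π at some index (remove the term dᵢ and decrement dᵢ of the remaining largest terms by 1), then π' is graphic and π' ⪯ π in the Rao order; i.e., some realization of π' is an induced subgraph of some realization of π. -/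
/-!
Take a realization `G` of `π` and let `S` be the `dᵢ` vertices of smallest rank other than `i`.
A 2-switch (symmetric difference with an alternating 4-cycle) preserves all degrees. While
`N(i) ≠ S` there are `a ∈ S \ N(i)` and `b ∈ N(i) \ S`; since `d b ≤ d a` and `b` has the
neighbour `i` that `a` lacks, `a` has a neighbour `c` that is not adjacent to `b`, and the switch
along `i - a - c - b` replaces `b` by `a` in `N(i)`. Once `N(i) = S`, deleting `i` leaves an
induced subgraph realizing `π'`.
-/

open scoped Classical

open scoped symmDiff

lemma Set.ncard_symmDiff_pair {α : Type*} {s : Set α} {p q : α} (hs : s.Finite)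
    (hpq : p ∈ s ↔ q ∉ s) : (s ∆ {p, q}).ncard = s.ncard := by
  have key : ∀ p q, p ∈ s → q ∉ s → (s ∆ {p, q}).ncard = s.ncard := fun p q hp hq => by
    have hswap : s ∆ {p, q} = insert q (s \ {p}) := by
      ext w
      simp only [Set.mem_symmDiff, Set.mem_insert_iff, Set.mem_singleton_iff, Set.mem_sdiff]
      grind
    rw [hswap, Set.ncard_insert_of_notMem (fun h => hq h.1) hs.sdiff,
      Set.ncard_sdiff_singleton_add_one hp hs]
  by_cases hp : p ∈ s
  · exact key p q hp (hpq.mp hp)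
  · rw [Set.pair_comm]
    exact key q p (not_not.mp (mt hpq.mpr hp)) hp

namespace Fin

variable {m : ℕ}

lemma ite_val_succAbove (i : Fin (m + 1)) (x : Fin m) :
    (if (i.succAbove x : ℕ) < i then (i.succAbove x : ℕ) else (i.succAbove x : ℕ) - 1) =
      x := by
  rcases lt_or_ge x.val i.val with h | h
  · rw [succAbove_of_castSucc_lt _ _ (by simpa [lt_def])]
    simp [h]
  · rw [succAbove_of_le_castSucc _ _ (by simpa [le_def])]
    simp [show ¬ (x : ℕ) + 1 < i by omega]

lemma map_val_univ_erase {α : Type*} (i : Fin (m + 1)) (f : Fin (m + 1) → α) :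
    (Finset.univ.erase i).val.map f = Finset.univ.val.map (f ∘ i.succAbove) := by
  rw [univ_succAbove m i, Finset.erase_cons, Finset.map_val, Multiset.map_map]
  rfl

lemma ncard_image_succAbove_setOf_val_lt (i : Fin (m + 1)) {k : ℕ} (hk : k ≤ m) :
    (i.succAbove '' {x : Fin m | (x : ℕ) < k}).ncard = k := by
  rw [Set.ncard_image_of_injective _ succAbove_right_injective, ← Finset.coe_filter_univ,
    Set.ncard_coe_finset, card_filter_val_lt, min_eq_right hk]

lemma le_of_mem_image_succAbove_setOf_val_lt {d : Fin (m + 1) → ℕ} (hd : Antitone d)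
    {i a b : Fin (m + 1)} {k : ℕ} (ha : a ∈ i.succAbove '' {x : Fin m | (x : ℕ) < k})
    (hb : b ∉ i.succAbove '' {x : Fin m | (x : ℕ) < k}) (hbi : b ≠ i) : d b ≤ d a := by
  obtain ⟨x, hx, rfl⟩ := ha
  obtain ⟨y, rfl⟩ := exists_succAbove_eq hbi
  have hxy : x < y := by
    by_contra! hyx
    exact hb ⟨y, lt_of_le_of_lt (le_def.mp hyx) hx, rfl⟩
  exact hd ((strictMono_succAbove i) hxy).le

end Fin

namespace SimpleGraph

variable {V : Type*} (G : SimpleGraph V)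

lemma ncard_neighborSet_lt_card [Finite V] (v : V) : (G.neighborSet v).ncard < Nat.card V :=
  Set.ncard_lt_card fun h => G.irrefl (show v ∈ G.neighborSet v by rw [h]; trivial)

lemma neighborSet_symmDiff (C : SimpleGraph V) (v : V) :
    (G ∆ C).neighborSet v = G.neighborSet v ∆ C.neighborSet v := by
  ext w
  simp [symmDiff_def]

def fourCycle (w x y z : V) : SimpleGraph V :=
  fromEdgeSet {s(w, x), s(x, y), s(y, z), s(z, w)}

lemma fourCycle_rotate (w x y z : V) : fourCycle w x y z = fourCycle x y z w := by
  ext u v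
  simp only [fourCycle, fromEdgeSet_adj, Set.mem_insert_iff, Set.mem_singleton_iff]
  grind

lemma fourCycle_neighborSet_self {w x y z : V} (hwx : w ≠ x) (hwy : w ≠ y) (hwz : w ≠ z) :
    (fourCycle w x y z).neighborSet w = {x, z} := by
  ext v
  simp only [fourCycle, mem_neighborSet, fromEdgeSet_adj, Set.mem_insert_iff,
    Set.mem_singleton_iff, Sym2.eq_iff]
  grind

lemma fourCycle_neighborSet_of_notMem {w x y z v : V} (hv : v ∉ ({w, x, y, z} : Set V)) :
    (fourCycle w x y z).neighborSet v = ∅ := by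
  ext u
  simp only [fourCycle, mem_neighborSet, fromEdgeSet_adj, Set.mem_insert_iff,
    Set.mem_singleton_iff, Sym2.eq_iff] at hv ⊢
  grind

/-- A 2-switch: every vertex of the alternating 4-cycle trades one neighbour for another. -/
lemma ncard_neighborSet_symmDiff_fourCycle [Finite V] {w x y z : V} (hxy : G.Adj x y)
    (hzw : G.Adj z w) (hwx : ¬G.Adj w x) (hyz : ¬G.Adj y z) (hwx' : w ≠ x) (hyz' : y ≠ z)
    (hwy : w ≠ y) (hxz : x ≠ z) (v : V) :
    ((G ∆ fourCycle w x y z).neighborSet v).ncard = (G.neighborSet v).ncard := by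
  have hxy' := G.ne_of_adj hxy
  have hzw' := G.ne_of_adj hzw
  rw [neighborSet_symmDiff]
  by_cases hv : v ∈ ({w, x, y, z} : Set V)
  · simp only [Set.mem_insert_iff, Set.mem_singleton_iff] at hv
    rcases hv with rfl | rfl | rfl | rfl
    · rw [fourCycle_neighborSet_self hwx' hwy hzw'.symm]
      exact Set.ncard_symmDiff_pair (Set.toFinite _) (iff_of_false hwx (not_not.mpr hzw.symm))
    · rw [fourCycle_rotate, fourCycle_neighborSet_self hxy' hxz hwx'.symm]
      exact Set.ncard_symmDiff_pair (Set.toFinite _) (iff_of_true hxy fun h => hwx h.symm)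
    · rw [fourCycle_rotate, fourCycle_rotate,
        fourCycle_neighborSet_self hyz' hwy.symm hxy'.symm]
      exact Set.ncard_symmDiff_pair (Set.toFinite _) (iff_of_false hyz (not_not.mpr hxy.symm))
    · rw [fourCycle_rotate, fourCycle_rotate, fourCycle_rotate,
        fourCycle_neighborSet_self hzw' hxz.symm hyz'.symm]
      exact Set.ncard_symmDiff_pair (Set.toFinite _) (iff_of_true hzw fun h => hyz h.symm)
  · rw [fourCycle_neighborSet_of_notMem hv, ← Set.bot_eq_empty, symmDiff_bot]

lemma exists_adj_not_adj_of_ncard_le_s15 [Finite V] {a b i : V} (hai : a ≠ i) (hia : ¬G.Adj i a)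
    (hib : G.Adj i b) (hdeg : (G.neighborSet b).ncard ≤ (G.neighborSet a).ncard) :
    ∃ c, G.Adj a c ∧ ¬G.Adj b c ∧ c ≠ b := by
  by_contra! h
  have hsub : G.neighborSet a \ {b} ⊂ G.neighborSet b \ {a} := by
    refine (Set.ssubset_iff_of_subset ?_).mpr
      ⟨i, ⟨hib.symm, hai.symm⟩, fun hi => hia hi.1.symm⟩
    rintro c ⟨hac, hcb⟩
    exact ⟨by_contra fun hbc => hcb (h c hac hbc), (G.ne_of_adj hac).symm⟩
  have hlt := Set.ncard_lt_ncard hsub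
  by_cases hab : G.Adj a b
  · rw [Set.ncard_sdiff_singleton_of_mem (show b ∈ G.neighborSet a from hab),
      Set.ncard_sdiff_singleton_of_mem (show a ∈ G.neighborSet b from hab.symm)] at hlt
    omega
  · rw [Set.sdiff_singleton_eq_self (show b ∉ G.neighborSet a from hab),
      Set.sdiff_singleton_eq_self (show a ∉ G.neighborSet b from mt G.adj_symm hab)] at hlt
    omega

theorem exists_degree_preserving_neighborSet_eq [Finite V] {d : V → ℕ}
    (hG : ∀ v, (G.neighborSet v).ncard = d v) {i : V} {S : Set V} (hiS : i ∉ S)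
    (hS : S.ncard = d i) (hdom : ∀ a ∈ S, ∀ b ∉ S, b ≠ i → d b ≤ d a) :
    ∃ G' : SimpleGraph V, (∀ v, (G'.neighborSet v).ncard = d v) ∧ G'.neighborSet i = S := by
  induction hk : (S \ G.neighborSet i).ncard using Nat.strong_induction_on generalizing G with
  | _ k ih =>
  by_cases hsub : S ⊆ G.neighborSet i
  · exact ⟨G, hG, (Set.eq_of_subset_of_ncard_le hsub (by rw [hG, hS])).symm⟩
  obtain ⟨a, haS, haN⟩ := Set.not_subset.mp hsub
  obtain ⟨b, hbN, hbS⟩ : ∃ b ∈ G.neighborSet i, b ∉ S := by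
    by_contra! h
    exact hsub (Set.eq_of_subset_of_ncard_le h (by rw [hG, hS])).symm.subset
  have hib : G.Adj i b := hbN
  have hai : a ≠ i := ne_of_mem_of_not_mem haS hiS
  have hab : a ≠ b := ne_of_mem_of_not_mem haS hbS
  obtain ⟨c, hac, hbc, hcb⟩ := G.exists_adj_not_adj_of_ncard_le_s15 hai haN hib
    (by rw [hG, hG]; exact hdom a haS b hbS (G.ne_of_adj hib).symm)
  have hci : c ≠ i := by rintro rfl; exact haN hac.symm
  set G₁ := G ∆ fourCycle i a c b
  have hN₁ : G₁.neighborSet i = G.neighborSet i ∆ {a, b} := by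
    rw [neighborSet_symmDiff, fourCycle_neighborSet_self hai.symm hci.symm (G.ne_of_adj hib)]
  have hlt : (S \ G₁.neighborSet i).ncard < k := by
    rw [← hk, hN₁]
    refine Set.ncard_lt_ncard ((Set.ssubset_iff_of_subset ?_).mpr ⟨a, ⟨haS, haN⟩, ?_⟩)
    · rintro v ⟨hvS, hvN⟩
      simp only [Set.mem_symmDiff, Set.mem_insert_iff, Set.mem_singleton_iff] at hvN
      grind
    · simp [Set.mem_symmDiff, haN]
  exact ih _ hlt G₁ (fun v => by
    rw [ncard_neighborSet_symmDiff_fourCycle G hac hib.symm haN (mt G.adj_symm hbc) hai.symm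
      hcb hci.symm hab, hG]) rfl

lemma degSeq_comap_succAboveEmb {m : ℕ} (G : SimpleGraph (Fin (m + 1))) (i : Fin (m + 1)) :
    degSeq (G.comap i.succAboveEmb) = (Finset.univ.erase i).val.map fun j =>
      if G.Adj i j then (G.neighborSet j).ncard - 1 else (G.neighborSet j).ncard := by
  rw [Fin.map_val_univ_erase, degSeq]
  refine Multiset.map_congr rfl fun x _ => ?_
  have hN : (G.comap i.succAboveEmb).neighborSet x =
      i.succAbove ⁻¹' (G.neighborSet (i.succAbove x) \ {i}) := by
    ext y
    simp [Fin.succAbove_ne]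
  rw [hN, Set.ncard_preimage_of_injective_subset_range Fin.succAbove_right_injective
    (by simp [Set.subset_def]), Function.comp_apply]
  split_ifs with hix
  · exact Set.ncard_sdiff_singleton_of_mem hix.symm
  · have hi : i ∉ G.neighborSet (i.succAbove x) := mt G.adj_symm hix
    rw [Set.sdiff_singleton_eq_self hi]

end SimpleGraph

/-- If `π'` is a KW-reduction of a non-increasing graphic sequence `d` at index `i`
(delete the term `d i` and decrement the `d i` largest remaining terms by 1, i.e. the
remaining terms of smallest rank), then `π'` is graphic and `π' ⪯ π` in the Rao order. -/
theorem stmt15 {n : ℕ} (d : Fin n → ℕ)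
    (hmono : ∀ i j : Fin n, i ≤ j → d j ≤ d i)
    (hgraphic : ∃ G : SimpleGraph (Fin n), ∀ v, (G.neighborSet v).ncard = d v)
    (i : Fin n) (π' : Multiset ℕ)
    (hπ' : π' = (Finset.univ.erase i).val.map (fun (j : Fin n) =>
      if (if j.val < i.val then j.val else j.val - 1) < d i then d j - 1 else d j)) :
    Graphic π' ∧ RaoLE π' (Finset.univ.val.map d) := by
  obtain ⟨m, rfl⟩ : ∃ m, n = m + 1 := ⟨n - 1, by have := i.pos; omega⟩
  obtain ⟨G, hG⟩ := hgraphic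
  have hdi : d i ≤ m := by simpa [hG] using G.ncard_neighborSet_lt_card i
  -- make `i` adjacent to the `d i` vertices of smallest rank once `i` is deleted
  obtain ⟨G', hG', hNi⟩ := G.exists_degree_preserving_neighborSet_eq hG
    (by simp [Fin.succAbove_ne]) (Fin.ncard_image_succAbove_setOf_val_lt i hdi)
    fun _ ha _ hb => Fin.le_of_mem_image_succAbove_setOf_val_lt hmono ha hb
  have hdeg : degSeq (G'.comap i.succAboveEmb) = π' := by
    rw [hπ', G'.degSeq_comap_succAboveEmb, Fin.map_val_univ_erase, Fin.map_val_univ_erase]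
    refine Multiset.map_congr rfl fun x _ => ?_
    have hiN : G'.Adj i (i.succAbove x) ↔ (x : ℕ) < d i := by
      rw [← SimpleGraph.mem_neighborSet, hNi, Fin.succAbove_right_injective.mem_set_image]
      rfl
    simp only [Function.comp_apply, hiN, hG', Fin.ite_val_succAbove]
  have hdeg' : degSeq G' = Finset.univ.val.map d := Multiset.map_congr rfl fun v _ => hG' v
  exact ⟨⟨m, _, hdeg⟩, m, m + 1, _, G', hdeg, hdeg', ⟨SimpleGraph.Embedding.comap _ _⟩⟩
end

section
/- In a split graph G with a KS-partition in which the clique K and independent set S are both nonempty and G has no swing vertex (no vertex whose degree equals the clique number), every vertex of K has strictly larger degree than every vertex of S. -/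
/-!
A vertex `b ∈ S` adjacent to all of `K` could be moved into the clique, and a vertex `a ∈ K`
with no neighbour in `S` could be moved into the independent set; either move produces a
swing vertex. So `b` misses some `k ∈ K`, giving `N(b) ⊆ K \ {k}`, while `a` sees some
`s ∈ S`, giving `insert s (K \ {a}) ⊆ N(a)`. Hence `deg b < |K| ≤ deg a`.
-/

namespace IsKSPart

variable {V : Type} {G : SimpleGraph V} {K S : Set V}

theorem insert_clique (hKS : IsKSPart G K S) {b : V} (hb : ∀ k ∈ K, G.Adj b k) :
    IsKSPart G (insert b K) (S \ {b}) := by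
  obtain ⟨hcov, hdisj, hclq, hind⟩ := hKS
  refine ⟨fun v => ?_, ?_, hclq.insert fun k hk _ => hb k hk, hind.mono Set.sdiff_subset⟩
  · by_cases hvb : v = b
    · exact Or.inl (.inl hvb)
    · exact (hcov v).imp .inr fun hv => ⟨hv, hvb⟩
  · rintro v ⟨rfl | hvK, hvS, hvb⟩
    · exact hvb rfl
    · exact hdisj v ⟨hvK, hvS⟩

theorem insert_indep (hKS : IsKSPart G K S) {a : V} (ha : ∀ s ∈ S, ¬ G.Adj a s) :
    IsKSPart G (K \ {a}) (insert a S) := by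
  obtain ⟨hcov, hdisj, hclq, hind⟩ := hKS
  refine ⟨fun v => ?_, ?_, hclq.subset Set.sdiff_subset, ?_⟩
  · by_cases hva : v = a
    · exact Or.inr (.inl hva)
    · exact (hcov v).imp (fun hv => ⟨hv, hva⟩) .inr
  · rintro v ⟨⟨hvK, hva⟩, rfl | hvS⟩
    · exact hva rfl
    · exact hdisj v ⟨hvK, hvS⟩
  · exact Set.Pairwise.insert hind fun s hs _ => ⟨ha s hs, fun h => ha s hs h.symm⟩

theorem neighborSet_subset_of_mem_indep (hKS : IsKSPart G K S) {b : V} (hb : b ∈ S) :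
    G.neighborSet b ⊆ K := fun x hx =>
  (hKS.1 x).resolve_right fun hxS => hKS.2.2.2 hb hxS hx.ne hx

theorem ncard_neighborSet_lt [Finite V] (hKS : IsKSPart G K S) {b k : V} (hb : b ∈ S)
    (hk : k ∈ K) (hbk : ¬ G.Adj b k) : (G.neighborSet b).ncard < K.ncard := by
  have hsub : G.neighborSet b ⊆ K \ {k} := fun x hx =>
    ⟨hKS.neighborSet_subset_of_mem_indep hb hx, by rintro rfl; exact hbk hx⟩
  calc (G.neighborSet b).ncard ≤ (K \ {k}).ncard := Set.ncard_le_ncard hsub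
    _ < K.ncard := Set.ncard_sdiff_singleton_lt_of_mem hk

theorem ncard_le_ncard_neighborSet [Finite V] (hKS : IsKSPart G K S) {a s : V} (ha : a ∈ K)
    (hs : s ∈ S) (has : G.Adj a s) : K.ncard ≤ (G.neighborSet a).ncard := by
  have hsK : s ∉ K \ {a} := fun h => hKS.2.1 s ⟨h.1, hs⟩
  have hsub : insert s (K \ {a}) ⊆ G.neighborSet a := by
    rintro x (rfl | ⟨hxK, hxa⟩)
    · exact has
    · exact hKS.2.2.1 ha hxK (Ne.symm hxa)
  calc K.ncard = (K \ {a}).ncard + 1 := (Set.ncard_sdiff_singleton_add_one ha).symm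
    _ = (insert s (K \ {a})).ncard := (Set.ncard_insert_of_notMem hsK).symm
    _ ≤ (G.neighborSet a).ncard := Set.ncard_le_ncard hsub

end IsKSPart

theorem stmt16_general {V : Type} [Fintype V] (G : SimpleGraph V) (K S : Set V)
    (hKS : IsKSPart G K S)
    (hswing : ∀ K1 S1 K2 S2 : Set V, IsKSPart G K1 S1 → IsKSPart G K2 S2 →
      ∀ v, v ∈ K1 → v ∈ S2 → False) :
    ∀ a ∈ K, ∀ b ∈ S, (G.neighborSet b).ncard < (G.neighborSet a).ncard := by
  intro a ha b hb
  obtain ⟨k, hk, hbk⟩ : ∃ k ∈ K, ¬ G.Adj b k := by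
    by_contra! h
    exact hswing _ _ K S (hKS.insert_clique h) hKS b (Set.mem_insert b K) hb
  obtain ⟨s, hs, has⟩ : ∃ s ∈ S, G.Adj a s := by
    by_contra! h
    exact hswing K S _ _ hKS (hKS.insert_indep h) a ha (Set.mem_insert a S)
  exact (hKS.ncard_neighborSet_lt hb hk hbk).trans_le (hKS.ncard_le_ncard_neighborSet ha hs has)

/-- In a split graph with a KS-partition having both parts nonempty and no swing vertex
(no vertex lying in the clique of one KS-partition and the stable set of another),
every clique vertex has strictly larger degree than every stable-set vertex. -/
theorem stmt16 {V : Type} [Fintype V] (G : SimpleGraph V) (K S : Set V)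
    (hKS : IsKSPart G K S) (hKne : K.Nonempty) (hSne : S.Nonempty)
    (hswing : ∀ K1 S1 K2 S2 : Set V, IsKSPart G K1 S1 → IsKSPart G K2 S2 →
      ∀ v, v ∈ K1 → v ∈ S2 → False) :
    ∀ a ∈ K, ∀ b ∈ S, (G.neighborSet b).ncard < (G.neighborSet a).ncard :=
  stmt16_general G K S hKS hswing
end
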